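/- arXiv:1804.02242 — 3 statements merged into one kernel-verified Lean document; each statement's English description precedes it below -/
import Mathlib

section
/- Let G=(V,E) be a finite simple undirected graph, let x : E → ℝ≥0 satisfy ∑_{e ∈ δ(v)} x_e ≤ 1 for every vertex v ∈ V, and let A be a random subset of V whose distribution satisfies (i) Pr[v ∈ A] = ∑_{e ∈ δ(v)} x_e for every v ∈ V, and (ii) Pr[u ∈ A and v ∈ A] = Pr[u ∈ A] · Pr[v ∈ A] for every edge {u,v} ∈ E. Then E[ η(A, E ∩ (A choose 2)) ] ≥ (∑_{e ∈ E} x_e)² / |V|, where η(A, E ∩ (A choose 2)) denotes the maximum cardinality of a matching in the subgraph of G induced by A. -/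
/-!
Write `q v = x(δ(v)) = Pr[v ∈ A]`. By independence `Pr[a, b ∈ A] = q a * q b` for every edge,
so any matching `M` gives `E[η(A)] ≥ ∑_{ab ∈ M} q a * q b`. Build `M` greedily on the support
of `x`, always taking an edge of largest `q a * q b`, and charge every edge `e` to the matching
edge `f` that blocked it: `e` and `f` share a vertex and the `q`-product of `e` is at most that of
`f`, hence `ψ f ≤ ψ e` for `ψ(ab) = 1/q a + 1/q b`. The mass `X f` charged to `f = ab` is at most
`q a + q b`, so `X f ^ 2 ≤ q a q b · X f ψ f`, and Cauchy–Schwarz gives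
`(∑ x)² ≤ (∑_M q a q b) · ∑_M X f ψ f ≤ (∑_M q a q b) · ∑_e x e ψ e`,
where `∑_e x e ψ e = ∑_v x(δ(v)) / q v ≤ |V|`.
-/

open scoped Classical
open Finset

/-- The maximum cardinality `η(S, E ∩ (S choose 2))` of a matching in the subgraph of `G`
induced by the vertex set `S`: the largest size of a set of pairwise vertex-disjoint
edges of `G` having both endpoints in `S`. -/
noncomputable def inducedMatchingNumber {V : Type} [Fintype V] [DecidableEq V]
    (G : SimpleGraph V) [DecidableRel G.Adj] (S : Finset V) : ℕ :=
  ((G.edgeFinset.filter (fun e => ∀ v ∈ e, v ∈ S)).powerset.filter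
      (fun M => ∀ e ∈ M, ∀ f ∈ M, e ≠ f → ∀ v : V, v ∈ e → v ∉ f)).sup Finset.card

section Matching

variable {V : Type*}

def PairwiseVertexDisjoint (M : Finset (Sym2 V)) : Prop :=
  ∀ e ∈ M, ∀ f ∈ M, e ≠ f → ∀ v : V, v ∈ e → v ∉ f

theorem exists_pairwiseVertexDisjoint_dominating {α : Type*} [LinearOrder α] (w : Sym2 V → α)
    (F : Finset (Sym2 V)) :
    ∃ M ⊆ F, PairwiseVertexDisjoint M ∧ ∀ e ∈ F, ∃ f ∈ M, (∃ c ∈ f, c ∈ e) ∧ w e ≤ w f := by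
  induction F using Finset.strongInduction with
  | _ F ih =>
    rcases F.eq_empty_or_nonempty with rfl | hne
    · exact ⟨∅, empty_subset _, by simp [PairwiseVertexDisjoint], by simp⟩
    obtain ⟨f, hfF, hfmax⟩ := F.exists_max_image w hne
    have hss : F.filter (fun e => ∀ v ∈ f, v ∉ e) ⊂ F := by
      refine filter_ssubset.mpr ⟨f, hfF, fun h => ?_⟩
      exact h _ (Sym2.out_fst_mem f) (Sym2.out_fst_mem f)
    obtain ⟨M, hMsub, hM, hdom⟩ := ih _ hss
    refine ⟨insert f M, insert_subset hfF (hMsub.trans (filter_subset _ _)), ?_, ?_⟩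
    · have hfM : ∀ g ∈ M, ∀ v ∈ f, v ∉ g := fun g hg => (mem_filter.mp (hMsub hg)).2
      intro g hg g' hg' hne v hv
      rcases mem_insert.mp hg with rfl | hgM
      · rcases mem_insert.mp hg' with rfl | hgM'
        · exact absurd rfl hne
        · exact hfM g' hgM' v hv
      · rcases mem_insert.mp hg' with rfl | hgM'
        · exact fun hv' => hfM g hgM v hv' hv
        · exact hM g hgM g' hgM' hne v hv
    · intro e he
      by_cases hef : ∀ v ∈ f, v ∉ e
      · obtain ⟨g, hg, hc, hw⟩ := hdom e (mem_filter.mpr ⟨he, hef⟩)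
        exact ⟨g, mem_insert_of_mem hg, hc, hw⟩
      · push Not at hef
        exact ⟨f, mem_insert_self _ _, hef, hfmax e he⟩

def edgeProd (q : V → ℝ) : Sym2 V → ℝ :=
  Sym2.lift ⟨fun a b => q a * q b, fun _ _ => mul_comm _ _⟩

@[simp]
lemma edgeProd_mk (q : V → ℝ) (a b : V) : edgeProd q s(a, b) = q a * q b := rfl

noncomputable def edgeInvSum (q : V → ℝ) : Sym2 V → ℝ :=
  Sym2.lift ⟨fun a b => (q a)⁻¹ + (q b)⁻¹, fun _ _ => add_comm _ _⟩

@[simp]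
lemma edgeInvSum_mk (q : V → ℝ) (a b : V) : edgeInvSum q s(a, b) = (q a)⁻¹ + (q b)⁻¹ := rfl

lemma edgeInvSum_le_of_edgeProd_le {q : V → ℝ} {e f : Sym2 V} {c : V} (hce : c ∈ e) (hcf : c ∈ f)
    (hq : ∀ v ∈ e, 0 < q v) (h : edgeProd q e ≤ edgeProd q f) :
    edgeInvSum q f ≤ edgeInvSum q e := by
  obtain ⟨d, rfl⟩ := Sym2.mem_iff_exists.mp hce
  obtain ⟨d', rfl⟩ := Sym2.mem_iff_exists.mp hcf
  rw [edgeProd_mk, edgeProd_mk] at h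
  have hdd' : q d ≤ q d' := le_of_mul_le_mul_left h (hq c (Sym2.mem_mk_left c d))
  simpa using inv_anti₀ (hq d (Sym2.mem_mk_right c d)) hdd'

lemma sq_le_edgeProd_mul_edgeInvSum {q : V → ℝ} {a b : V} (ha : 0 < q a) (hb : 0 < q b) {X : ℝ}
    (hX0 : 0 ≤ X) (hX : X ≤ q a + q b) :
    X ^ 2 ≤ edgeProd q s(a, b) * (X * edgeInvSum q s(a, b)) := by
  have h : q a * q b * ((q a)⁻¹ + (q b)⁻¹) = q a + q b := by field_simp; ring
  rw [edgeProd_mk, edgeInvSum_mk, mul_left_comm, h, sq]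
  exact mul_le_mul_of_nonneg_left hX hX0

section Load

variable [DecidableEq V] (F : Finset (Sym2 V)) (x : Sym2 V → ℝ)

def load (v : V) : ℝ := ∑ e ∈ F.filter (fun e => v ∈ e), x e

variable {F x}

lemma load_nonneg (hx : ∀ e ∈ F, 0 ≤ x e) (v : V) : 0 ≤ load F x v :=
  sum_nonneg fun e he => hx e (mem_filter.mp he).1

lemma le_load (hx : ∀ e ∈ F, 0 ≤ x e) {e : Sym2 V} (he : e ∈ F) {v : V} (hv : v ∈ e) :
    x e ≤ load F x v :=
  single_le_sum (fun e he => hx e (mem_filter.mp he).1) (mem_filter.mpr ⟨he, hv⟩)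

lemma sum_le_load_add_load (hx : ∀ e ∈ F, 0 ≤ x e) {T : Finset (Sym2 V)} (hT : T ⊆ F) {a b : V}
    (hab : ∀ e ∈ T, a ∈ e ∨ b ∈ e) : ∑ e ∈ T, x e ≤ load F x a + load F x b := by
  have hx' : ∀ e ∈ F.filter (fun e => a ∈ e) ∪ F.filter (fun e => b ∈ e), 0 ≤ x e :=
    fun e he => hx e (by rcases mem_union.mp he with h | h <;> exact (mem_filter.mp h).1)
  calc ∑ e ∈ T, x e ≤ ∑ e ∈ F.filter (fun e => a ∈ e) ∪ F.filter (fun e => b ∈ e), x e := by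
        refine sum_le_sum_of_subset_of_nonneg (fun e he => ?_) fun e he _ => hx' e he
        rcases hab e he with h | h
        · exact mem_union_left _ (mem_filter.mpr ⟨hT he, h⟩)
        · exact mem_union_right _ (mem_filter.mpr ⟨hT he, h⟩)
    _ ≤ load F x a + load F x b := by
        rw [load, load, ← sum_union_inter]
        exact le_add_of_nonneg_right
          (sum_nonneg fun e he => hx' e (mem_union_left _ (mem_inter.mp he).1))

lemma sum_mul_edgeInvSum_load_le_card [Fintype V] (hF : ∀ e ∈ F, ¬ e.IsDiag) :
    ∑ e ∈ F, x e * edgeInvSum (load F x) e ≤ Fintype.card V := by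
  have hsplit : ∀ e ∈ F, x e * edgeInvSum (load F x) e
      = ∑ v : V, if v ∈ e then x e * (load F x v)⁻¹ else 0 := by
    intro e he
    induction e using Sym2.ind with
    | h a b =>
      have hab : a ≠ b := fun h => hF _ he (Sym2.mk_isDiag_iff.mpr h)
      rw [← sum_filter, show univ.filter (fun v => v ∈ s(a, b)) = {a, b} by ext; simp,
        sum_pair hab, edgeInvSum_mk, mul_add]
  calc ∑ e ∈ F, x e * edgeInvSum (load F x) e
      = ∑ v : V, load F x v * (load F x v)⁻¹ := by
        rw [sum_congr rfl hsplit, sum_comm]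
        simp only [load, sum_filter, sum_mul, ite_mul, zero_mul]
    -- a vertex of load `0` contributes `0 * 0⁻¹ = 0`
    _ ≤ ∑ _v : V, (1 : ℝ) := sum_le_sum fun v _ => mul_inv_le_one
    _ = Fintype.card V := by simp

end Load

section Charging

variable [DecidableEq V] [Fintype V] {F M : Finset (Sym2 V)} {x : Sym2 V → ℝ}

theorem sq_sum_le_card_mul_sum_edgeProd_of_dominating (hF : ∀ e ∈ F, ¬ e.IsDiag)
    (hx : ∀ e ∈ F, 0 < x e) (hMF : M ⊆ F)
    (hdom : ∀ e ∈ F, ∃ f ∈ M, (∃ c ∈ f, c ∈ e) ∧ edgeProd (load F x) e ≤ edgeProd (load F x) f) :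
    (∑ e ∈ F, x e) ^ 2 ≤ Fintype.card V * ∑ f ∈ M, edgeProd (load F x) f := by
  set q := load F x
  have hx0 : ∀ e ∈ F, 0 ≤ x e := fun e he => (hx e he).le
  have hq : ∀ e ∈ F, ∀ v ∈ e, 0 < q v := fun e he v hv => (hx e he).trans_le (le_load hx0 he hv)
  choose! φ hφM hφc hφw using hdom
  set X : Sym2 V → ℝ := fun f => ∑ e ∈ F with φ e = f, x e
  have hX0 : ∀ f, 0 ≤ X f := fun f => sum_nonneg fun e he => hx0 e (mem_filter.mp he).1
  have hsq : ∀ f ∈ M, X f ^ 2 ≤ edgeProd q f * (X f * edgeInvSum q f) := by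
    intro f hf
    induction f using Sym2.ind with
    | h a b =>
      have hab : ∀ e ∈ F.filter (φ · = s(a, b)), a ∈ e ∨ b ∈ e := by
        intro e he
        obtain ⟨heF, hφe⟩ := mem_filter.mp he
        obtain ⟨c, hc, hce⟩ := hφc e heF
        rw [hφe] at hc
        rcases Sym2.mem_iff.mp hc with rfl | rfl <;> simp [hce]
      exact sq_le_edgeProd_mul_edgeInvSum (hq _ (hMF hf) a (Sym2.mem_mk_left a b))
        (hq _ (hMF hf) b (Sym2.mem_mk_right a b)) (hX0 _)
        (sum_le_load_add_load hx0 (filter_subset _ _) hab)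
  have hcharge : ∑ f ∈ M, X f * edgeInvSum q f ≤ ∑ e ∈ F, x e * edgeInvSum q e := by
    rw [← sum_fiberwise_of_maps_to hφM]
    refine sum_le_sum fun f _ => ?_
    rw [sum_mul]
    refine sum_le_sum fun e he => ?_
    obtain ⟨heF, rfl⟩ := mem_filter.mp he
    obtain ⟨c, hc, hce⟩ := hφc e heF
    exact mul_le_mul_of_nonneg_left
      (edgeInvSum_le_of_edgeProd_le hce hc (hq e heF) (hφw e heF)) (hx0 e heF)
  have hq0 : ∀ v, 0 ≤ q v := fun v => load_nonneg hx0 v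
  have hprod0 : ∀ f, 0 ≤ edgeProd q f := Sym2.ind fun a b => mul_nonneg (hq0 a) (hq0 b)
  have hinv0 : ∀ f, 0 ≤ edgeInvSum q f :=
    Sym2.ind fun a b => add_nonneg (inv_nonneg.mpr (hq0 a)) (inv_nonneg.mpr (hq0 b))
  calc (∑ e ∈ F, x e) ^ 2 = (∑ f ∈ M, X f) ^ 2 := by rw [sum_fiberwise_of_maps_to hφM]
    _ ≤ (∑ f ∈ M, edgeProd q f) * ∑ f ∈ M, X f * edgeInvSum q f :=
        sum_sq_le_sum_mul_sum_of_sq_le_mul M (fun f _ => hprod0 f)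
          (fun f _ => mul_nonneg (hX0 f) (hinv0 f)) hsq
    _ ≤ (∑ f ∈ M, edgeProd q f) * Fintype.card V :=
        mul_le_mul_of_nonneg_left (hcharge.trans (sum_mul_edgeInvSum_load_le_card hF))
          (sum_nonneg fun f _ => hprod0 f)
    _ = Fintype.card V * ∑ f ∈ M, edgeProd q f := mul_comm _ _

end Charging

theorem exists_pairwiseVertexDisjoint_sq_sum_le_card_mul [DecidableEq V] [Fintype V]
    {F : Finset (Sym2 V)} {x : Sym2 V → ℝ} (hF : ∀ e ∈ F, ¬ e.IsDiag) (hx : ∀ e ∈ F, 0 ≤ x e) :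
    ∃ M ⊆ F, PairwiseVertexDisjoint M ∧
      (∑ e ∈ F, x e) ^ 2 ≤ Fintype.card V * ∑ f ∈ M, edgeProd (load F x) f := by
  set Fpos := F.filter (fun e => 0 < x e)
  have hsum_pos : ∀ T ⊆ F, ∑ e ∈ T.filter (fun e => 0 < x e), x e = ∑ e ∈ T, x e := fun T hT =>
    sum_filter_of_ne fun e he h => (hx e (hT he)).lt_of_ne' h
  have hload : load Fpos x = load F x := by
    ext v
    rw [load, load, filter_comm, hsum_pos _ (filter_subset _ _)]
  obtain ⟨M, hMF, hM, hdom⟩ := exists_pairwiseVertexDisjoint_dominating (edgeProd (load Fpos x)) Fpos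
  refine ⟨M, hMF.trans (filter_subset _ _), hM, ?_⟩
  have key := sq_sum_le_card_mul_sum_edgeProd_of_dominating
    (fun e he => hF e (filter_subset _ _ he)) (fun e he => (mem_filter.mp he).2) hMF hdom
  rwa [hload, hsum_pos F subset_rfl] at key

end Matching

section Probability

variable {V : Type} [Fintype V] [DecidableEq V] (G : SimpleGraph V) [DecidableRel G.Adj]

lemma card_filter_le_inducedMatchingNumber {M : Finset (Sym2 V)} (hMG : M ⊆ G.edgeFinset)
    (hM : PairwiseVertexDisjoint M) (S : Finset V) :
    (M.filter (fun f => ∀ v ∈ f, v ∈ S)).card ≤ inducedMatchingNumber G S := by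
  refine le_sup (mem_filter.mpr ⟨mem_powerset.mpr fun f hf => ?_, fun e he f hf => ?_⟩)
  · exact mem_filter.mpr ⟨hMG (mem_filter.mp hf).1, (mem_filter.mp hf).2⟩
  · exact hM e (mem_filter.mp he).1 f (mem_filter.mp hf).1

lemma sum_prob_le_expected_inducedMatchingNumber {M : Finset (Sym2 V)} (hMG : M ⊆ G.edgeFinset)
    (hM : PairwiseVertexDisjoint M) (p : Finset V → ℝ) (hp0 : ∀ S, 0 ≤ p S) :
    ∑ f ∈ M, ∑ S ∈ univ.filter (fun S => ∀ v ∈ f, v ∈ S), p S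
      ≤ ∑ S : Finset V, p S * (inducedMatchingNumber G S : ℝ) := by
  calc ∑ f ∈ M, ∑ S ∈ univ.filter (fun S => ∀ v ∈ f, v ∈ S), p S
      = ∑ S : Finset V, p S * ((M.filter (fun f => ∀ v ∈ f, v ∈ S)).card : ℝ) := by
        simp only [sum_filter, sum_comm (s := M), card_filter, Nat.cast_sum, mul_sum]
        simp
    _ ≤ ∑ S : Finset V, p S * (inducedMatchingNumber G S : ℝ) :=
        sum_le_sum fun S _ => mul_le_mul_of_nonneg_left
          (Nat.cast_le.mpr (card_filter_le_inducedMatchingNumber G hMG hM S)) (hp0 S)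

end Probability

theorem stmt_1_general {V : Type} [Fintype V] [DecidableEq V]
    (G : SimpleGraph V) [DecidableRel G.Adj]
    (x : Sym2 V → ℝ) (hx : ∀ e ∈ G.edgeFinset, 0 ≤ x e)
    (p : Finset V → ℝ) (hp0 : ∀ S : Finset V, 0 ≤ p S)
    (hmarg : ∀ v : V,
      ∑ S ∈ (Finset.univ : Finset (Finset V)).filter (fun S => v ∈ S), p S
        = ∑ e ∈ G.edgeFinset.filter (fun e => v ∈ e), x e)
    (hind : ∀ u v : V, G.Adj u v →
      ∑ S ∈ (Finset.univ : Finset (Finset V)).filter (fun S => u ∈ S ∧ v ∈ S), p S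
        = (∑ S ∈ (Finset.univ : Finset (Finset V)).filter (fun S => u ∈ S), p S)
          * (∑ S ∈ (Finset.univ : Finset (Finset V)).filter (fun S => v ∈ S), p S)) :
    (∑ e ∈ G.edgeFinset, x e) ^ 2 / (Fintype.card V : ℝ)
      ≤ ∑ S : Finset V, p S * (inducedMatchingNumber G S : ℝ) := by
  obtain ⟨M, hMG, hM, hsq⟩ := exists_pairwiseVertexDisjoint_sq_sum_le_card_mul
    (fun e he => G.not_isDiag_of_mem_edgeFinset he) hx
  have hprob : ∀ f ∈ M, edgeProd (load G.edgeFinset x) f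
      = ∑ S ∈ univ.filter (fun S => ∀ v ∈ f, v ∈ S), p S := by
    intro f hf
    induction f using Sym2.ind with
    | h a b =>
      rw [edgeProd_mk, load, load, ← hmarg, ← hmarg, ← hind a b (by simpa using hMG hf)]
      simp
  rw [sum_congr rfl hprob] at hsq
  refine div_le_of_le_mul₀ (Nat.cast_nonneg _)
    (sum_nonneg fun S _ => mul_nonneg (hp0 S) (Nat.cast_nonneg _)) ?_
  calc (∑ e ∈ G.edgeFinset, x e) ^ 2
      ≤ Fintype.card V * ∑ f ∈ M, ∑ S ∈ univ.filter (fun S => ∀ v ∈ f, v ∈ S), p S := hsq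
    _ ≤ Fintype.card V * ∑ S : Finset V, p S * (inducedMatchingNumber G S : ℝ) :=
        mul_le_mul_of_nonneg_left (sum_prob_le_expected_inducedMatchingNumber G hMG hM p hp0)
          (Nat.cast_nonneg _)
    _ = (∑ S : Finset V, p S * (inducedMatchingNumber G S : ℝ)) * Fintype.card V := mul_comm _ _

/-- Given a finite simple graph `G = (V,E)`, a fractional edge weight
`x : E → ℝ≥0` with `x(δ(v)) ≤ 1` for all `v`, and a random subset `A` of `V`
(modeled by a probability mass function `p` on `Finset V`) with
`Pr[v ∈ A] = x(δ(v))` for every vertex and `Pr[u ∈ A ∧ v ∈ A] = Pr[u ∈ A]·Pr[v ∈ A]`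
for every edge `{u,v}`, the expected maximum matching size of the subgraph of `G`
induced by `A` is at least `x(E)² / |V|`. -/
theorem stmt_1 {V : Type} [Fintype V] [DecidableEq V]
    (G : SimpleGraph V) [DecidableRel G.Adj]
    (x : Sym2 V → ℝ) (hx : ∀ e ∈ G.edgeFinset, 0 ≤ x e)
    (hdeg : ∀ v : V, ∑ e ∈ G.edgeFinset.filter (fun e => v ∈ e), x e ≤ 1)
    (p : Finset V → ℝ) (hp0 : ∀ S : Finset V, 0 ≤ p S)
    (hp1 : ∑ S : Finset V, p S = 1)
    (hmarg : ∀ v : V,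
      ∑ S ∈ (Finset.univ : Finset (Finset V)).filter (fun S => v ∈ S), p S
        = ∑ e ∈ G.edgeFinset.filter (fun e => v ∈ e), x e)
    (hind : ∀ u v : V, G.Adj u v →
      ∑ S ∈ (Finset.univ : Finset (Finset V)).filter (fun S => u ∈ S ∧ v ∈ S), p S
        = (∑ S ∈ (Finset.univ : Finset (Finset V)).filter (fun S => u ∈ S), p S)
          * (∑ S ∈ (Finset.univ : Finset (Finset V)).filter (fun S => v ∈ S), p S)) :
    (∑ e ∈ G.edgeFinset, x e) ^ 2 / (Fintype.card V : ℝ)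
      ≤ ∑ S : Finset V, p S * (inducedMatchingNumber G S : ℝ) :=
  stmt_1_general G x hx p hp0 hmarg hind
end

section
/- Let G=(V,E) be a finite simple undirected graph, let x : E → ℝ≥0 satisfy ∑_{e ∈ δ(v)} x_e ≤ 1 for every vertex v ∈ V, and let A be a random subset of V whose distribution satisfies (i) Pr[v ∈ A] = ∑_{e ∈ δ(v)} x_e for every v ∈ V, and (ii) Pr[u ∈ A and v ∈ A] = Pr[u ∈ A] · Pr[v ∈ A] for every edge {u,v} ∈ E. Let z be an extreme point (vertex) of the polytope Q = { y ∈ ℝ^E : y ≥ 0 and ∑_{e ∈ δ(v)} y_e = ∑_{e ∈ δ(v)} x_e for all v ∈ V }. Then |supp(z)| ≤ |V|, and there exists a matching M ⊆ E of G such that E[ |{ e ∈ M : both endpoints of e lie in A }| ] ≥ ∑_{e ∈ E} z_e² ≥ (∑_{e ∈ E₁} z_e)² / |E₁| + (∑_{e ∈ E₂} z_e)² / |E₂| for every pair of disjoint nonempty sets E₁, E₂ ⊆ supp(z). -/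
/-!
At an extreme point `z` of `Q`, no nonzero `w` supported on `supp z` has `w(δ(v)) = 0` for all
`v` (else `z ± ε w ∈ Q`), so `|supp z|` is at most the number `|V|` of degree constraints.

Write `X v = z(δ(v)) = x(δ(v)) = Pr[v ∈ A]`, so an edge `uv` lies in `A` with probability
`X u * X v`. Build `M` greedily: take a heaviest remaining edge `uv` and discard all edges
meeting it. Their squares sum to at most `z_uv * (X u + X v - z_uv) ≤ X u * X v`, since
`z_uv ≤ X u, X v`. The lower bound on `∑ z_e²` is Cauchy–Schwarz on `E₁` and `E₂`.
-/

open scoped Classical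
open Finset

theorem eq_zero_of_add_mem_of_sub_mem_of_mem_extremePoints {E : Type*} [AddCommGroup E]
    [Module ℝ E] {P : Set E} {z w : E} (hz : z ∈ P.extremePoints ℝ) (hadd : z + w ∈ P)
    (hsub : z - w ∈ P) : w = 0 := by
  have hseg : z ∈ openSegment ℝ (z + w) (z - w) :=
    ⟨1 / 2, 1 / 2, by norm_num, by norm_num, by norm_num, by module⟩
  simpa using hz.2 hadd hsub hseg

open Filter Topology in
theorem exists_pos_mul_abs_le {ι : Type*} [Finite ι] {z w : ι → ℝ}
    (hw : ∀ i, w i ≠ 0 → 0 < z i) (hz : ∀ i, 0 ≤ z i) : ∃ ε > 0, ∀ i, ε * |w i| ≤ z i := by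
  have h : ∀ i, ∀ᶠ ε in 𝓝[>] (0 : ℝ), ε * |w i| ≤ z i := by
    intro i
    by_cases hwi : w i = 0
    · exact Eventually.of_forall fun ε => by simpa [hwi] using hz i
    have hlim : Tendsto (fun ε : ℝ => ε * |w i|) (𝓝[>] 0) (𝓝 0) :=
      ((continuous_id.mul continuous_const).tendsto' 0 0 (zero_mul _)).mono_left
        nhdsWithin_le_nhds
    exact hlim.eventually (ge_mem_nhds (hw i hwi))
  exact ((eventually_all.2 h).and self_mem_nhdsWithin).exists.imp fun ε ⟨h, hε⟩ => ⟨hε, h⟩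

theorem exists_ne_zero_mem_ker_of_card_lt {K ι κ : Type*} [Field K] [Fintype κ]
    (L : (ι → K) →ₗ[K] (κ → K)) (S : Finset ι) (hS : Fintype.card κ < #S) :
    ∃ w, w ≠ 0 ∧ (∀ i ∉ S, w i = 0) ∧ L w = 0 := by
  let ext := Function.ExtendByZero.linearMap K ((↑) : S → ι)
  have hker : LinearMap.ker (L ∘ₗ ext) ≠ ⊥ :=
    LinearMap.ker_ne_bot_of_finrank_lt (by simpa using hS)
  obtain ⟨a, ha, ha0⟩ := (Submodule.ne_bot_iff _).1 hker
  refine ⟨ext a, ?_, fun i hi => ?_, ha⟩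
  · rw [← map_zero ext]
    exact fun h => ha0 (Function.extend_injective Subtype.val_injective (0 : ι → K) h)
  · exact Function.extend_apply' _ _ _ fun ⟨j, hj⟩ => hi (hj ▸ j.2)

theorem card_filter_pos_le_of_mem_extremePoints {ι κ : Type*} [Finite ι] [Fintype κ]
    (L : (ι → ℝ) →ₗ[ℝ] (κ → ℝ)) (b : κ → ℝ) (F : Finset ι) {z : ι → ℝ}
    (hz : z ∈ Set.extremePoints ℝ
      {y | (∀ i, i ∉ F → y i = 0) ∧ (∀ i, 0 ≤ y i) ∧ ∀ k, L y k = b k}) :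
    #(F.filter fun i => 0 < z i) ≤ Fintype.card κ := by
  obtain ⟨hzF, hz0, hzb⟩ := hz.1
  by_contra! hcard
  obtain ⟨w, hw0, hwS, hLw⟩ := exists_ne_zero_mem_ker_of_card_lt L _ hcard
  have hwF : ∀ i ∉ F, w i = 0 := fun i hi => hwS i fun h => hi (mem_filter.1 h).1
  have hwz : ∀ i, w i ≠ 0 → 0 < z i := fun i hi => by
    by_contra h
    exact hi (hwS i fun hS => h (mem_filter.1 hS).2)
  obtain ⟨ε, hε, hεw⟩ := exists_pos_mul_abs_le hwz hz0
  have hmem : ∀ c : ℝ, |c| ≤ ε → z + c • w ∈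
      {y | (∀ i, i ∉ F → y i = 0) ∧ (∀ i, 0 ≤ y i) ∧ ∀ k, L y k = b k} := by
    intro c hc
    refine ⟨fun i hi => by simp [hzF i hi, hwF i hi], fun i => ?_, fun k => by simp [hLw, hzb]⟩
    have : |c * w i| ≤ ε * |w i| := by
      rw [abs_mul]; exact mul_le_mul_of_nonneg_right hc (abs_nonneg _)
    have := neg_abs_le (c * w i)
    simp only [Pi.add_apply, Pi.smul_apply, smul_eq_mul]
    linarith [hεw i]
  have hεw0 : ε • w = 0 := eq_zero_of_add_mem_of_sub_mem_of_mem_extremePoints hz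
    (hmem ε (abs_of_pos hε).le)
    (by simpa [sub_eq_add_neg] using hmem (-ε) (by simp [abs_of_pos hε]))
  exact hw0 ((smul_eq_zero.1 hεw0).resolve_left hε.ne')

theorem sq_sum_div_card_le_sum_sq {α : Type*} (s : Finset α) (f : α → ℝ) :
    (∑ i ∈ s, f i) ^ 2 / #s ≤ ∑ i ∈ s, f i ^ 2 := by
  obtain rfl | hs := s.eq_empty_or_nonempty
  · simp
  rw [div_le_iff₀' (by exact_mod_cast hs.card_pos)]
  exact sq_sum_le_card_mul_sum_sq

theorem sq_sum_div_card_add_sq_sum_div_card_le {α : Type*} {s t u : Finset α} (f : α → ℝ)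
    (hs : s ⊆ u) (ht : t ⊆ u) (hst : Disjoint s t) :
    (∑ i ∈ s, f i) ^ 2 / #s + (∑ i ∈ t, f i) ^ 2 / #t ≤ ∑ i ∈ u, f i ^ 2 :=
  calc (∑ i ∈ s, f i) ^ 2 / #s + (∑ i ∈ t, f i) ^ 2 / #t
      ≤ ∑ i ∈ s, f i ^ 2 + ∑ i ∈ t, f i ^ 2 :=
        add_le_add (sq_sum_div_card_le_sum_sq s f) (sq_sum_div_card_le_sum_sq t f)
    _ = ∑ i ∈ s ∪ t, f i ^ 2 := (sum_union hst).symm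
    _ ≤ ∑ i ∈ u, f i ^ 2 :=
        sum_le_sum_of_subset_of_nonneg (union_subset hs ht) fun _ _ _ => sq_nonneg _

theorem sum_mul_card_filter {α β R : Type*} [CommSemiring R] (s : Finset α) (t : Finset β)
    (p : β → R) (P : α → β → Prop) [∀ a b, Decidable (P a b)] :
    ∑ b ∈ t, p b * #(s.filter fun a => P a b) = ∑ a ∈ s, ∑ b ∈ t.filter (P a), p b := by
  simp only [card_eq_sum_ones, Nat.cast_sum, mul_sum, sum_filter]
  rw [sum_comm]
  simp

def Sym2.liftMul {V : Type*} (X : V → ℝ) : Sym2 V → ℝ :=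
  Sym2.lift ⟨fun u v => X u * X v, fun _ _ => mul_comm _ _⟩

@[simp]
theorem Sym2.liftMul_mk {V : Type*} (X : V → ℝ) (u v : V) :
    Sym2.liftMul X s(u, v) = X u * X v :=
  rfl

namespace SimpleGraph

variable {V : Type*} [DecidableEq V] (G : SimpleGraph V) [Fintype G.edgeSet]

def incidenceMap : (Sym2 V → ℝ) →ₗ[ℝ] (V → ℝ) :=
  LinearMap.pi fun v => ∑ e ∈ G.edgeFinset.filter (v ∈ ·), LinearMap.proj e

@[simp]
theorem incidenceMap_apply (y : Sym2 V → ℝ) (v : V) :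
    G.incidenceMap y v = ∑ e ∈ G.edgeFinset.filter (v ∈ ·), y e := by
  simp [incidenceMap]

variable {z : Sym2 V → ℝ}

theorem le_incidenceMap_apply (hz : ∀ e, 0 ≤ z e) {e : Sym2 V} {v : V}
    (he : e ∈ G.edgeFinset) (hv : v ∈ e) : z e ≤ G.incidenceMap z v := by
  rw [incidenceMap_apply]
  exact single_le_sum (fun f _ => hz f) (mem_filter.2 ⟨he, hv⟩)

/-- The edges meeting `s(u, v)` lie in `δ(u) ∪ δ(v)`, and `s(u, v)` itself is counted twice
there. -/
theorem sum_filter_meets_le (hz : ∀ e, 0 ≤ z e) {F : Finset (Sym2 V)}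
    (hF : F ⊆ G.edgeFinset) {u v : V} (huv : s(u, v) ∈ G.edgeFinset) :
    ∑ f ∈ F.filter (fun f => ¬∀ w ∈ s(u, v), w ∉ f), z f
      ≤ G.incidenceMap z u + G.incidenceMap z v - z s(u, v) := by
  set Eu := G.edgeFinset.filter (u ∈ ·)
  set Ev := G.edgeFinset.filter (v ∈ ·)
  have hsub : F.filter (fun f => ¬∀ w ∈ s(u, v), w ∉ f) ⊆ Eu ∪ Ev := by
    intro f hf
    simp only [mem_filter, Sym2.mem_iff, forall_eq_or_imp, forall_eq, not_and_or,
      not_not] at hf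
    rcases hf with ⟨hfF, hu | hv⟩
    · exact mem_union_left _ (mem_filter.2 ⟨hF hfF, hu⟩)
    · exact mem_union_right _ (mem_filter.2 ⟨hF hfF, hv⟩)
  have hinter : z s(u, v) ≤ ∑ f ∈ Eu ∩ Ev, z f :=
    single_le_sum (fun f _ => hz f)
      (mem_inter.2 ⟨mem_filter.2 ⟨huv, Sym2.mem_mk_left u v⟩,
        mem_filter.2 ⟨huv, Sym2.mem_mk_right u v⟩⟩)
  have hunion := sum_union_inter (s₁ := Eu) (s₂ := Ev) (f := z)
  have hmono := sum_le_sum_of_subset_of_nonneg hsub fun f _ _ => hz f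
  simp only [incidenceMap_apply]
  linarith

theorem sum_sq_filter_meets_le (hz : ∀ e, 0 ≤ z e) {F : Finset (Sym2 V)}
    (hF : F ⊆ G.edgeFinset) {u v : V} (huv : s(u, v) ∈ G.edgeFinset)
    (hmax : ∀ f ∈ F, z f ≤ z s(u, v)) :
    ∑ f ∈ F.filter (fun f => ¬∀ w ∈ s(u, v), w ∉ f), z f ^ 2
      ≤ G.incidenceMap z u * G.incidenceMap z v := by
  have hu := G.le_incidenceMap_apply hz huv (Sym2.mem_mk_left u v)
  have hv := G.le_incidenceMap_apply hz huv (Sym2.mem_mk_right u v)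
  calc ∑ f ∈ F.filter (fun f => ¬∀ w ∈ s(u, v), w ∉ f), z f ^ 2
      ≤ ∑ f ∈ F.filter (fun f => ¬∀ w ∈ s(u, v), w ∉ f), z s(u, v) * z f :=
        sum_le_sum fun f hf => by
          rw [sq]
          exact mul_le_mul_of_nonneg_right (hmax f (mem_filter.1 hf).1) (hz f)
    _ = z s(u, v) * ∑ f ∈ F.filter (fun f => ¬∀ w ∈ s(u, v), w ∉ f), z f := (mul_sum ..).symm
    _ ≤ z s(u, v) * (G.incidenceMap z u + G.incidenceMap z v - z s(u, v)) :=
        mul_le_mul_of_nonneg_left (G.sum_filter_meets_le hz hF huv) (hz _)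
    _ ≤ G.incidenceMap z u * G.incidenceMap z v := by
        nlinarith [mul_nonneg (sub_nonneg.2 hu) (sub_nonneg.2 hv)]

theorem exists_matching_sum_sq_le (hz : ∀ e, 0 ≤ z e) (F : Finset (Sym2 V))
    (hF : F ⊆ G.edgeFinset) :
    ∃ M ⊆ F, (M : Set (Sym2 V)).Pairwise (fun e f => ∀ w ∈ e, w ∉ f) ∧
      ∑ f ∈ F, z f ^ 2 ≤ ∑ e ∈ M, Sym2.liftMul (G.incidenceMap z) e := by
  induction F using Finset.strongInduction with
  | H F ih =>
  rcases F.eq_empty_or_nonempty with rfl | hne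
  · exact ⟨∅, empty_subset _, by simp, by simp⟩
  obtain ⟨e, heF, hmax⟩ := F.exists_max_image z hne
  induction e using Sym2.ind with
  | _ u v =>
  set F' := F.filter fun f => ∀ w ∈ s(u, v), w ∉ f
  have hF' : F' ⊂ F := filter_ssubset.2 ⟨s(u, v), heF, by simp⟩
  obtain ⟨M, hMF', hM, hsum⟩ := ih F' hF' ((filter_subset _ _).trans hF)
  have hdisj : ∀ f ∈ M, ∀ w ∈ s(u, v), w ∉ f := fun f hf => (mem_filter.1 (hMF' hf)).2
  have heM : s(u, v) ∉ M := fun h => hdisj _ h u (Sym2.mem_mk_left u v) (Sym2.mem_mk_left u v)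
  refine ⟨insert s(u, v) M, insert_subset heF (hMF'.trans (filter_subset _ _)), ?_, ?_⟩
  · rw [coe_insert, Set.pairwise_insert]
    exact ⟨hM, fun f hf _ => ⟨hdisj f hf, fun w hwf hwe => hdisj f hf w hwe hwf⟩⟩
  · rw [sum_insert heM, ← sum_filter_add_sum_filter_not F (fun f => ∀ w ∈ s(u, v), w ∉ f),
      add_comm, Sym2.liftMul_mk]
    exact add_le_add (G.sum_sq_filter_meets_le hz hF (hF heF) hmax) hsum

end SimpleGraph

theorem stmt_4_general {V : Type} [Fintype V] [DecidableEq V]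
    (G : SimpleGraph V) [DecidableRel G.Adj]
    (x : Sym2 V → ℝ)
    (p : Finset V → ℝ)
    (hmarg : ∀ v : V,
      ∑ S ∈ (Finset.univ : Finset (Finset V)).filter (fun S => v ∈ S), p S
        = ∑ e ∈ G.edgeFinset.filter (fun e => v ∈ e), x e)
    (hind : ∀ u v : V, G.Adj u v →
      ∑ S ∈ (Finset.univ : Finset (Finset V)).filter (fun S => u ∈ S ∧ v ∈ S), p S
        = (∑ S ∈ (Finset.univ : Finset (Finset V)).filter (fun S => u ∈ S), p S)
          * (∑ S ∈ (Finset.univ : Finset (Finset V)).filter (fun S => v ∈ S), p S))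
    (z : Sym2 V → ℝ)
    (hz : z ∈ Set.extremePoints ℝ
      {y : Sym2 V → ℝ | (∀ e, e ∉ G.edgeFinset → y e = 0) ∧ (∀ e, 0 ≤ y e) ∧
        ∀ v : V, ∑ e ∈ G.edgeFinset.filter (fun e => v ∈ e), y e
          = ∑ e ∈ G.edgeFinset.filter (fun e => v ∈ e), x e}) :
    (G.edgeFinset.filter (fun e => 0 < z e)).card ≤ Fintype.card V ∧
    ∃ M : Finset (Sym2 V), M ⊆ G.edgeFinset ∧
      (∀ e ∈ M, ∀ f ∈ M, e ≠ f → ∀ v : V, v ∈ e → v ∉ f) ∧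
      (∑ e ∈ G.edgeFinset, (z e) ^ 2
        ≤ ∑ S : Finset V, p S * ((M.filter (fun e => ∀ v ∈ e, v ∈ S)).card : ℝ)) ∧
      ∀ E₁ E₂ : Finset (Sym2 V),
        E₁ ⊆ G.edgeFinset.filter (fun e => 0 < z e) →
        E₂ ⊆ G.edgeFinset.filter (fun e => 0 < z e) →
        Disjoint E₁ E₂ → E₁.Nonempty → E₂.Nonempty →
        (∑ e ∈ E₁, z e) ^ 2 / (E₁.card : ℝ) + (∑ e ∈ E₂, z e) ^ 2 / (E₂.card : ℝ)
          ≤ ∑ e ∈ G.edgeFinset, (z e) ^ 2 := by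
  refine ⟨card_filter_pos_le_of_mem_extremePoints G.incidenceMap (G.incidenceMap x) _
    (by simpa only [SimpleGraph.incidenceMap_apply] using hz), ?_⟩
  obtain ⟨-, hz0, hzx⟩ := hz.1
  obtain ⟨M, hME, hM, hsum⟩ := G.exists_matching_sum_sq_le hz0 G.edgeFinset subset_rfl
  have hprob : ∀ e ∈ M, ∑ S ∈ univ.filter (fun S => ∀ v ∈ e, v ∈ S), p S
      = Sym2.liftMul (G.incidenceMap z) e := by
    intro e he
    induction e using Sym2.ind with
    | _ u v =>
    simp only [Sym2.mem_iff, forall_eq_or_imp, forall_eq, Sym2.liftMul_mk,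
      SimpleGraph.incidenceMap_apply, hzx, ← hmarg, hind u v (G.mem_edgeFinset.1 (hME he))]
  refine ⟨M, hME, fun e he f hf hef => hM he hf hef, ?_, fun E₁ E₂ h₁ h₂ hdisj _ _ =>
    sq_sum_div_card_add_sq_sum_div_card_le z (h₁.trans (filter_subset _ _))
      (h₂.trans (filter_subset _ _)) hdisj⟩
  rw [sum_mul_card_filter, sum_congr rfl hprob]
  exact hsum

/-- With `G`, `x`, and the random set `A` (modeled by the pmf `p`) as in
Statement 0, let `z` be an extreme point of the polytope
`Q = {y ∈ ℝ^E : y ≥ 0, y(δ(v)) = x(δ(v)) ∀v}` (functions on `Sym2 V` vanishing off the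
edge set model `ℝ^E`). Then `|supp z| ≤ |V|` and there exists a matching `M ⊆ E` with
`E[|{e ∈ M : e ⊆ A}|] ≥ ∑_e z_e² ≥ (∑_{E₁} z)²/|E₁| + (∑_{E₂} z)²/|E₂|`
for all disjoint nonempty `E₁, E₂ ⊆ supp z`. -/
theorem stmt_4 {V : Type} [Fintype V] [DecidableEq V]
    (G : SimpleGraph V) [DecidableRel G.Adj]
    (x : Sym2 V → ℝ) (hx : ∀ e ∈ G.edgeFinset, 0 ≤ x e)
    (hdeg : ∀ v : V, ∑ e ∈ G.edgeFinset.filter (fun e => v ∈ e), x e ≤ 1)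
    (p : Finset V → ℝ) (hp0 : ∀ S : Finset V, 0 ≤ p S)
    (hp1 : ∑ S : Finset V, p S = 1)
    (hmarg : ∀ v : V,
      ∑ S ∈ (Finset.univ : Finset (Finset V)).filter (fun S => v ∈ S), p S
        = ∑ e ∈ G.edgeFinset.filter (fun e => v ∈ e), x e)
    (hind : ∀ u v : V, G.Adj u v →
      ∑ S ∈ (Finset.univ : Finset (Finset V)).filter (fun S => u ∈ S ∧ v ∈ S), p S
        = (∑ S ∈ (Finset.univ : Finset (Finset V)).filter (fun S => u ∈ S), p S)
          * (∑ S ∈ (Finset.univ : Finset (Finset V)).filter (fun S => v ∈ S), p S))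
    (z : Sym2 V → ℝ)
    (hz : z ∈ Set.extremePoints ℝ
      {y : Sym2 V → ℝ | (∀ e, e ∉ G.edgeFinset → y e = 0) ∧ (∀ e, 0 ≤ y e) ∧
        ∀ v : V, ∑ e ∈ G.edgeFinset.filter (fun e => v ∈ e), y e
          = ∑ e ∈ G.edgeFinset.filter (fun e => v ∈ e), x e}) :
    (G.edgeFinset.filter (fun e => 0 < z e)).card ≤ Fintype.card V ∧
    ∃ M : Finset (Sym2 V), M ⊆ G.edgeFinset ∧
      (∀ e ∈ M, ∀ f ∈ M, e ≠ f → ∀ v : V, v ∈ e → v ∉ f) ∧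
      (∑ e ∈ G.edgeFinset, (z e) ^ 2
        ≤ ∑ S : Finset V, p S * ((M.filter (fun e => ∀ v ∈ e, v ∈ S)).card : ℝ)) ∧
      ∀ E₁ E₂ : Finset (Sym2 V),
        E₁ ⊆ G.edgeFinset.filter (fun e => 0 < z e) →
        E₂ ⊆ G.edgeFinset.filter (fun e => 0 < z e) →
        Disjoint E₁ E₂ → E₁.Nonempty → E₂.Nonempty →
        (∑ e ∈ E₁, z e) ^ 2 / (E₁.card : ℝ) + (∑ e ∈ E₂, z e) ^ 2 / (E₂.card : ℝ)
          ≤ ∑ e ∈ G.edgeFinset, (z e) ^ 2 :=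
  stmt_4_general G x p hmarg hind z hz
end

section
/- Let (T,L) be a TAP instance where T is a k-wide tree with root r and principal subtrees T₁,…,T_q having edge sets E₁,…,E_q. For each i ∈ [q], let L_i ⊆ L be a set of links covering E_i. Call a vertex u of T_i active if some cross-link in L_i has u as an endpoint, and suppose that for each active vertex u there is exactly one such cross-link ℓ_u ∈ L_i. Let M ⊆ L be a matching (a set of links whose endpoints are pairwise distinct) consisting of cross-links between active vertices, and for each i let L_i(M) = { ℓ_u : u ∈ V_i is an endpoint of some link of M }. Then the set B := ( ∪_{i=1}^{q} ( L_i \ L_i(M) ) ) ∪ M covers all edges of T, i.e., B is a solution to the TAP instance (T,L). -/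
/-!
Let `e` be an edge of the principal subtree `T_c`, covered by a link `ℓ` of `Lc c`. If `ℓ` survives
in `B` there is nothing to do. Otherwise `ℓ = uv` is a cross-link with `u ∈ T_c` matched by some
`m = uw ∈ M`. Since `v` lies outside `T_c`, the `u`–`v` path leaves `T_c` through the root, so `e`
lies on the `u`–`r` path; as `m` is a cross-link, the `u`–`w` path also passes through `r`, hence
contains `e`. All path statements are expressed through the tree metric: `a` lies on the `x`–`y`
path iff `dist x a + dist a y = dist x y`.
-/

open scoped Classical

/-- `a` lies on the unique path in the tree `G` between the endpoints of the link `ℓ`. -/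
def MemLinkPath {V : Type} (G : SimpleGraph V) (ℓ : Sym2 V) (a : V) : Prop :=
  ∃ u v : V, ℓ = s(u, v) ∧ G.dist u a + G.dist a v = G.dist u v

/-- The edge set `P_ℓ` of the unique path in the tree `G` between the endpoints of `ℓ`. -/
def linkPath {V : Type} (G : SimpleGraph V) (ℓ : Sym2 V) : Set (Sym2 V) :=
  {e | e ∈ G.edgeSet ∧ ∀ a ∈ e, MemLinkPath G ℓ a}

/-- The link set `U` covers the edge set `F`. -/
def Covers {V : Type} (G : SimpleGraph V) (U : Set (Sym2 V)) (F : Set (Sym2 V)) : Prop :=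
  F ⊆ ⋃ ℓ ∈ U, linkPath G ℓ

/-- `v` belongs to the principal subtree of the tree `G` rooted at `r` associated with the
child `c` of `r`. -/
def MemPrincipal {V : Type} (G : SimpleGraph V) (r c v : V) : Prop :=
  v = r ∨ G.dist r c + G.dist c v = G.dist r v

/-- Vertex set of the principal subtree of child `c`. -/
noncomputable def principalVerts {V : Type} [Fintype V] (G : SimpleGraph V) (r c : V) :
    Finset V :=
  Finset.univ.filter (fun v => MemPrincipal G r c v)

/-- The leaves (degree-1 vertices) of the principal subtree of child `c`. -/
noncomputable def principalLeaves {V : Type} [Fintype V] (G : SimpleGraph V) (r c : V) :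
    Finset V :=
  (principalVerts G r c).filter
    (fun v => ((principalVerts G r c).filter (fun w => G.Adj v w)).card = 1)

/-- The tree `G` is `k`-wide with root `r`: every principal subtree has at most `k`
leaves. -/
def KWide {V : Type} [Fintype V] (G : SimpleGraph V) (r : V) (k : ℕ) : Prop :=
  ∀ c : V, G.Adj r c → (principalLeaves G r c).card ≤ k

/-- `u` and `v` lie in a common principal subtree of the tree `G` rooted at `r`. -/
def SameSubtree {V : Type} (G : SimpleGraph V) (r u v : V) : Prop :=
  ∃ c : V, G.Adj r c ∧ MemPrincipal G r c u ∧ MemPrincipal G r c v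

/-- `ℓ` is a cross-link with respect to the root `r`. -/
def IsCrossLink {V : Type} (G : SimpleGraph V) (r : V) (ℓ : Sym2 V) : Prop :=
  ∃ u v : V, ℓ = s(u, v) ∧ u ≠ r ∧ v ≠ r ∧ ¬ SameSubtree G r u v

/-- The edge set `E_c` of the principal subtree of child `c`. -/
def principalEdges {V : Type} (G : SimpleGraph V) (r c : V) : Set (Sym2 V) :=
  {e | e ∈ G.edgeSet ∧ ∀ a ∈ e, MemPrincipal G r c a}

open SimpleGraph

section PrincipalSubtree

variable {V : Type} {G : SimpleGraph V} {r c : V}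

lemma memPrincipal_iff_of_ne {v : V} (hv : v ≠ r) :
    MemPrincipal G r c v ↔ G.dist r c + G.dist c v = G.dist r v := by
  simp [MemPrincipal, hv]

lemma MemPrincipal.of_adj_of_dist_eq_add_one (hG : G.Connected) {x y : V}
    (hx : MemPrincipal G r c x) (hxr : x ≠ r) (hxy : G.Adj x y)
    (hd : G.dist r y = G.dist r x + 1) : MemPrincipal G r c y := by
  rw [memPrincipal_iff_of_ne hxr] at hx
  have hcy : G.dist c y ≤ G.dist c x + 1 :=
    (hG.dist_triangle).trans_eq (by rw [dist_eq_one_iff_adj.mpr hxy])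
  have hry : G.dist r y ≤ G.dist r c + G.dist c y := hG.dist_triangle
  exact Or.inr (by omega)

lemma exists_memPrincipal (hG : G.Connected) {a : V} (ha : a ≠ r) :
    ∃ c, G.Adj r c ∧ MemPrincipal G r c a := by
  obtain ⟨p, hp⟩ := hG.exists_walk_length_eq_dist r a
  cases p with
  | nil => exact absurd rfl ha
  | @cons _ c _ hc q =>
    refine ⟨c, hc, Or.inr ?_⟩
    have hq : G.dist c a ≤ q.length := dist_le q
    have hra : G.dist r a ≤ G.dist r c + G.dist c a := hG.dist_triangle
    rw [dist_eq_one_iff_adj.mpr hc] at hra ⊢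
    simp only [Walk.length_cons] at hp
    omega

lemma exists_isPath_cons_of_memPrincipal (hG : G.Connected) (hc : G.Adj r c) {a : V}
    (ha : MemPrincipal G r c a) (har : a ≠ r) : ∃ q : G.Walk c a, (Walk.cons hc q).IsPath := by
  rw [memPrincipal_iff_of_ne har, dist_eq_one_iff_adj.mpr hc] at ha
  obtain ⟨q, hq⟩ := hG.exists_walk_length_eq_dist c a
  exact ⟨q, Walk.isPath_of_length_eq_dist _ (by rw [Walk.length_cons, hq, add_comm, ha])⟩

/-- The first edge of the unique `r`–`a` path determines the principal subtree of `a`. -/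
lemma eq_of_memPrincipal (hT : G.IsTree) {c' a : V} (hc : G.Adj r c) (hc' : G.Adj r c')
    (har : a ≠ r) (h : MemPrincipal G r c a) (h' : MemPrincipal G r c' a) : c = c' := by
  obtain ⟨q, hq⟩ := exists_isPath_cons_of_memPrincipal hT.connected hc h har
  obtain ⟨q', hq'⟩ := exists_isPath_cons_of_memPrincipal hT.connected hc' h' har
  have := congrArg (fun p : G.Path r a => p.1.snd)
    ((hT.isAcyclic.subsingleton_path r a).elim ⟨_, hq⟩ ⟨_, hq'⟩)
  simpa using this

lemma MemPrincipal.of_adj (hT : G.IsTree) (hc : G.Adj r c) {x y : V}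
    (hx : MemPrincipal G r c x) (hxr : x ≠ r) (hyr : y ≠ r) (hxy : G.Adj x y) :
    MemPrincipal G r c y := by
  rcases hT.dist_eq_dist_add_one_of_adj r hxy with hd | hd
  · obtain ⟨c', hc', hy⟩ := exists_memPrincipal hT.connected hyr
    have hx' := hy.of_adj_of_dist_eq_add_one hT.connected hyr hxy.symm hd
    rwa [eq_of_memPrincipal hT hc hc' hxr hx hx']
  · exact hx.of_adj_of_dist_eq_add_one hT.connected hxr hxy hd

lemma MemPrincipal.of_walk (hT : G.IsTree) (hc : G.Adj r c) {u v : V} (p : G.Walk u v)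
    (hp : r ∉ p.support) (hu : MemPrincipal G r c u) : MemPrincipal G r c v := by
  induction p with
  | nil => exact hu
  | cons hxy q ih =>
    rw [Walk.support_cons, List.mem_cons, not_or] at hp
    exact ih hp.2 (hu.of_adj hT hc (Ne.symm hp.1) (fun h => hp.2 (h ▸ q.start_mem_support)) hxy)

lemma exists_mem_principalEdges (hT : G.IsTree) (r : V) {e : Sym2 V} (he : e ∈ G.edgeSet) :
    ∃ c, G.Adj r c ∧ e ∈ principalEdges G r c := by
  induction e using Sym2.ind with
  | _ x y =>
  have hxy : G.Adj x y := he
  suffices ∃ c, G.Adj r c ∧ MemPrincipal G r c x ∧ MemPrincipal G r c y by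
    obtain ⟨c, hc, hx, hy⟩ := this
    exact ⟨c, hc, he, fun a ha => by rcases Sym2.mem_iff.mp ha with rfl | rfl <;> assumption⟩
  by_cases hx : x = r
  · subst hx
    exact ⟨y, hxy, Or.inl rfl, Or.inr (by simp)⟩
  by_cases hy : y = r
  · subst hy
    exact ⟨x, hxy.symm, Or.inr (by simp), Or.inl rfl⟩
  obtain ⟨c, hc, hcx⟩ := exists_memPrincipal hT.connected hx
  exact ⟨c, hc, hcx, hcx.of_adj hT hc hx hy hxy⟩

lemma dist_add_dist_eq_of_not_sameSubtree (hT : G.IsTree) {u v : V} (hu : u ≠ r)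
    (huv : ¬ SameSubtree G r u v) : G.dist u r + G.dist r v = G.dist u v := by
  obtain ⟨p, hp⟩ := hT.connected.exists_walk_length_eq_dist u v
  by_cases hrp : r ∈ p.support
  · have hlen : (p.takeUntil r hrp).length + (p.dropUntil r hrp).length = p.length := by
      rw [← Walk.length_append, p.take_spec hrp]
    have hur := dist_le (p.takeUntil r hrp)
    have hrv := dist_le (p.dropUntil r hrp)
    have huv : G.dist u v ≤ G.dist u r + G.dist r v := hT.connected.dist_triangle
    omega
  · obtain ⟨c, hc, hcu⟩ := exists_memPrincipal hT.connected hu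
    exact absurd ⟨c, hc, hcu, hcu.of_walk hT hc p hrp⟩ huv

end PrincipalSubtree

section Links

variable {V : Type} {G : SimpleGraph V} {r : V}

lemma sameSubtree_comm {u v : V} : SameSubtree G r u v ↔ SameSubtree G r v u := by
  simp only [SameSubtree, and_comm (a := MemPrincipal G r _ u)]

lemma IsCrossLink.exists_eq_mk {ℓ : Sym2 V} (hℓ : IsCrossLink G r ℓ) {u : V} (hu : u ∈ ℓ) :
    ∃ v, ℓ = s(u, v) ∧ u ≠ r ∧ v ≠ r ∧ ¬ SameSubtree G r u v := by
  obtain ⟨x, y, rfl, hx, hy, hxy⟩ := hℓ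
  rcases Sym2.mem_iff.mp hu with rfl | rfl
  · exact ⟨y, rfl, hx, hy, hxy⟩
  · exact ⟨x, Sym2.eq_swap, hy, hx, sameSubtree_comm.not.mp hxy⟩

lemma memLinkPath_mk_iff {u v a : V} :
    MemLinkPath G s(u, v) a ↔ G.dist u a + G.dist a v = G.dist u v := by
  refine ⟨fun ⟨x, y, hxy, h⟩ => ?_, fun h => ⟨u, v, rfl, h⟩⟩
  rcases Sym2.eq_iff.mp hxy.symm with ⟨rfl, rfl⟩ | ⟨rfl, rfl⟩
  · exact h
  · grind [SimpleGraph.dist_comm]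

/-- An edge of the principal subtree of `c` on the path of a cross-link at `u ∈ T_c` lies on the
`u`–`r` path, hence on the path of every other cross-link at `u`. -/
lemma linkPath_inter_principalEdges_subset (hT : G.IsTree) {c u : V} {ℓ m : Sym2 V}
    (hc : G.Adj r c) (hℓ : IsCrossLink G r ℓ) (hm : IsCrossLink G r m) (huℓ : u ∈ ℓ)
    (hum : u ∈ m) (hu : MemPrincipal G r c u) :
    linkPath G ℓ ∩ principalEdges G r c ⊆ linkPath G m := by
  rintro e ⟨⟨he, heℓ⟩, -, hec⟩
  obtain ⟨v, rfl, hur, hvr, huv⟩ := hℓ.exists_eq_mk huℓ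
  obtain ⟨w, rfl, -, hwr, huw⟩ := hm.exists_eq_mk hum
  refine ⟨he, fun a ha => memLinkPath_mk_iff.mpr ?_⟩
  have hauv := memLinkPath_mk_iff.mp (heℓ a ha)
  have haur : G.dist u a + G.dist a r = G.dist u r := by
    by_cases har : a = r
    · simp [har]
    have hav : ¬ SameSubtree G r a v := fun ⟨c', hc', ha', hv'⟩ =>
      huv ⟨c, hc, hu, eq_of_memPrincipal hT hc' hc har ha' (hec a ha) ▸ hv'⟩
    have harv := dist_add_dist_eq_of_not_sameSubtree hT har hav
    have hur_le : G.dist u r ≤ G.dist u a + G.dist a r := hT.connected.dist_triangle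
    have huv_le : G.dist u v ≤ G.dist u r + G.dist r v := hT.connected.dist_triangle
    omega
  have hurw := dist_add_dist_eq_of_not_sameSubtree hT hur huw
  have haw_le : G.dist a w ≤ G.dist a r + G.dist r w := hT.connected.dist_triangle
  have huw_le : G.dist u w ≤ G.dist u a + G.dist a w := hT.connected.dist_triangle
  omega

end Links

theorem stmt_12_general {V : Type} [Fintype V] [DecidableEq V]
    (G : SimpleGraph V) [DecidableRel G.Adj] (hT : G.IsTree)
    (r : V)
    (Lc : V → Finset (Sym2 V))
    (hCover : ∀ c : V, G.Adj r c → Covers G (↑(Lc c)) (principalEdges G r c))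
    (M : Finset (Sym2 V))
    (hMcross : ∀ m ∈ M, IsCrossLink G r m ∧
      ∀ v ∈ m, ∃ c : V, G.Adj r c ∧ MemPrincipal G r c v ∧
        ∃ ℓ ∈ Lc c, IsCrossLink G r ℓ ∧ v ∈ ℓ) :
    Covers G
      (↑(((G.neighborFinset r).biUnion fun c =>
          Lc c \ ((Lc c).filter fun ℓ => IsCrossLink G r ℓ ∧
            ∃ u ∈ ℓ, MemPrincipal G r c u ∧ ∃ m ∈ M, u ∈ m)) ∪ M))
      G.edgeSet := by
  intro e he
  obtain ⟨c, hc, hec⟩ := exists_mem_principalEdges hT r he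
  obtain ⟨ℓ, hℓ, heℓ⟩ : ∃ ℓ ∈ Lc c, e ∈ linkPath G ℓ := by simpa using hCover c hc hec
  simp only [Set.mem_iUnion, Finset.coe_union, Set.mem_union, Finset.mem_coe, exists_prop]
  by_cases hkept : ℓ ∈ (Lc c).filter fun ℓ => IsCrossLink G r ℓ ∧
      ∃ u ∈ ℓ, MemPrincipal G r c u ∧ ∃ m ∈ M, u ∈ m
  · obtain ⟨-, hcross, u, huℓ, hu, m, hm, hum⟩ := Finset.mem_filter.mp hkept
    exact ⟨m, Or.inr hm, linkPath_inter_principalEdges_subset hT hc hcross (hMcross m hm).1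
      huℓ hum hu ⟨heℓ, hec⟩⟩
  · exact ⟨ℓ, Or.inl (Finset.mem_biUnion.mpr
      ⟨c, (G.mem_neighborFinset r c).mpr hc, Finset.mem_sdiff.mpr ⟨hℓ, hkept⟩⟩), heℓ⟩

/-- In a `k`-wide TAP instance, given for each principal subtree (indexed by
the children `c` of the root `r`) a link set `Lc c ⊆ L` covering its edges such that each
active vertex is the endpoint of exactly one cross-link of its local solution, and given a
matching `M` of cross-links between active vertices, the rewired set
`B = (⋃_c (Lc c \ Lc c(M))) ∪ M` covers all edges of `T`. -/
theorem stmt_12 {V : Type} [Fintype V] [DecidableEq V]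
    (G : SimpleGraph V) [DecidableRel G.Adj] (hT : G.IsTree)
    (r : V) (k : ℕ) (hWide : KWide G r k)
    (L : Finset (Sym2 V)) (hLlinks : ∀ ℓ ∈ L, ¬ ℓ.IsDiag)
    (Lc : V → Finset (Sym2 V))
    (hLcSub : ∀ c : V, G.Adj r c → Lc c ⊆ L)
    (hCover : ∀ c : V, G.Adj r c → Covers G (↑(Lc c)) (principalEdges G r c))
    (hUnique : ∀ c : V, G.Adj r c → ∀ u : V, MemPrincipal G r c u →
      ∀ ℓ₁ ∈ Lc c, ∀ ℓ₂ ∈ Lc c, IsCrossLink G r ℓ₁ → IsCrossLink G r ℓ₂ →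
        u ∈ ℓ₁ → u ∈ ℓ₂ → ℓ₁ = ℓ₂)
    (M : Finset (Sym2 V)) (hML : M ⊆ L)
    (hMatching : ∀ m₁ ∈ M, ∀ m₂ ∈ M, m₁ ≠ m₂ → ∀ v : V, v ∈ m₁ → v ∉ m₂)
    (hMcross : ∀ m ∈ M, IsCrossLink G r m ∧
      ∀ v ∈ m, ∃ c : V, G.Adj r c ∧ MemPrincipal G r c v ∧
        ∃ ℓ ∈ Lc c, IsCrossLink G r ℓ ∧ v ∈ ℓ) :
    Covers G
      (↑(((G.neighborFinset r).biUnion fun c =>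
          Lc c \ ((Lc c).filter fun ℓ => IsCrossLink G r ℓ ∧
            ∃ u ∈ ℓ, MemPrincipal G r c u ∧ ∃ m ∈ M, u ∈ m)) ∪ M))
      G.edgeSet :=
  stmt_12_general G hT r Lc hCover M hMcross
end
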